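/- Suppose u, v are smooth solutions of (v_t + u v_x)_x = 0 and u_xx = v_x² on ℝ × [0,T], with v_x(·,t) compactly supported for each t, and u_x having limits σ₊(t), σ₋(t) as x → ±∞ with all relevant convergence (also of v_x² u and u_x²) sufficient to integrate by parts. Then (d/dt)[u_x] + (1/2)[u_x²] = 0, where [f] = lim_{x→∞}f − lim_{x→−∞}f; i.e., σ₊′ + σ₊²/2 = σ₋′ + σ₋²/2. -/

import Mathlib

open MeasureTheory Filter

/-- Partial derivative in the first (spatial) variable. -/
noncomputable def pdx (f : ℝ → ℝ → ℝ) : ℝ → ℝ → ℝ :=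
  fun x t => deriv (fun x' => f x' t) x

/-- Partial derivative in the second (time) variable. -/
noncomputable def pdt (f : ℝ → ℝ → ℝ) : ℝ → ℝ → ℝ :=
  fun x t => deriv (fun t' => f x t') t

section helpers

variable {f : ℝ → ℝ → ℝ}

lemma hasDerivAt_slice_x (hf : ContDiff ℝ (⊤ : ℕ∞) ↿f) (x t : ℝ) :
    HasDerivAt (fun x' => f x' t) (fderiv ℝ ↿f (x, t) (1, 0)) x := by
  have h := (hf.differentiable (by simp) (x, t)).hasFDerivAt
  have h2 : HasDerivAt (fun x' : ℝ => (x', t)) ((1 : ℝ), (0 : ℝ)) x :=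
    (hasDerivAt_id x).prodMk (hasDerivAt_const x t)
  exact h.comp_hasDerivAt x h2

lemma hasDerivAt_slice_t (hf : ContDiff ℝ (⊤ : ℕ∞) ↿f) (x t : ℝ) :
    HasDerivAt (fun t' => f x t') (fderiv ℝ ↿f (x, t) (0, 1)) t := by
  have h := (hf.differentiable (by simp) (x, t)).hasFDerivAt
  have h2 : HasDerivAt (fun t' : ℝ => (x, t')) ((0 : ℝ), (1 : ℝ)) t :=
    (hasDerivAt_const t x).prodMk (hasDerivAt_id t)
  exact h.comp_hasDerivAt t h2

lemma pdx_eq_fderiv (hf : ContDiff ℝ (⊤ : ℕ∞) ↿f) (x t : ℝ) :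
    pdx f x t = fderiv ℝ ↿f (x, t) (1, 0) :=
  (hasDerivAt_slice_x hf x t).deriv

lemma pdt_eq_fderiv (hf : ContDiff ℝ (⊤ : ℕ∞) ↿f) (x t : ℝ) :
    pdt f x t = fderiv ℝ ↿f (x, t) (0, 1) :=
  (hasDerivAt_slice_t hf x t).deriv

lemma contDiff_pdx (hf : ContDiff ℝ (⊤ : ℕ∞) ↿f) : ContDiff ℝ (⊤ : ℕ∞) ↿(pdx f) := by
  have : ↿(pdx f) = fun p : ℝ × ℝ => fderiv ℝ ↿f p ((1 : ℝ), (0 : ℝ)) := by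
    funext p
    exact pdx_eq_fderiv hf p.1 p.2
  rw [this]
  exact (ContinuousLinearMap.apply ℝ ℝ ((1 : ℝ), (0 : ℝ))).contDiff.comp
    (hf.fderiv_right (m := (⊤ : ℕ∞)) (by simp))

lemma contDiff_pdt (hf : ContDiff ℝ (⊤ : ℕ∞) ↿f) : ContDiff ℝ (⊤ : ℕ∞) ↿(pdt f) := by
  have : ↿(pdt f) = fun p : ℝ × ℝ => fderiv ℝ ↿f p ((0 : ℝ), (1 : ℝ)) := by
    funext p
    exact pdt_eq_fderiv hf p.1 p.2
  rw [this]
  exact (ContinuousLinearMap.apply ℝ ℝ ((0 : ℝ), (1 : ℝ))).contDiff.comp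
    (hf.fderiv_right (m := (⊤ : ℕ∞)) (by simp))

lemma mixed_partials (hf : ContDiff ℝ (⊤ : ℕ∞) ↿f) (x t : ℝ) :
    pdt (pdx f) x t = pdx (pdt f) x t := by
  set F : ℝ × ℝ → ℝ := ↿f with hF
  have hfd : ContDiff ℝ (⊤ : ℕ∞) (fderiv ℝ F) := hf.fderiv_right (m := (⊤ : ℕ∞)) (by simp)
  have hD : HasFDerivAt (fderiv ℝ F) (fderiv ℝ (fderiv ℝ F) (x, t)) (x, t) :=
    (hfd.differentiable (by simp) (x, t)).hasFDerivAt
  set D := fderiv ℝ (fderiv ℝ F) (x, t) with hDdef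
  have key1 : pdt (pdx f) x t = D (0, 1) (1, 0) := by
    have hg : HasFDerivAt (fun p : ℝ × ℝ => fderiv ℝ F p ((1 : ℝ), (0 : ℝ)))
        ((ContinuousLinearMap.apply ℝ ℝ ((1 : ℝ), (0 : ℝ))).comp D) (x, t) :=
      (ContinuousLinearMap.apply ℝ ℝ ((1 : ℝ), (0 : ℝ))).hasFDerivAt.comp (x, t) hD
    have h2 : HasDerivAt (fun t' : ℝ => (x, t')) ((0 : ℝ), (1 : ℝ)) t :=
      (hasDerivAt_const t x).prodMk (hasDerivAt_id t)
    have hcurve : HasDerivAt (fun t' => fderiv ℝ F (x, t') ((1 : ℝ), (0 : ℝ)))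
        (D (0, 1) (1, 0)) t := hg.comp_hasDerivAt t h2
    have heq : (fun t' => pdx f x t') = fun t' => fderiv ℝ F (x, t') ((1 : ℝ), (0 : ℝ)) := by
      funext t'
      exact pdx_eq_fderiv hf x t'
    show deriv (fun t' => pdx f x t') t = D (0, 1) (1, 0)
    rw [heq]
    exact hcurve.deriv
  have key2 : pdx (pdt f) x t = D (1, 0) (0, 1) := by
    have hg : HasFDerivAt (fun p : ℝ × ℝ => fderiv ℝ F p ((0 : ℝ), (1 : ℝ)))
        ((ContinuousLinearMap.apply ℝ ℝ ((0 : ℝ), (1 : ℝ))).comp D) (x, t) :=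
      (ContinuousLinearMap.apply ℝ ℝ ((0 : ℝ), (1 : ℝ))).hasFDerivAt.comp (x, t) hD
    have h2 : HasDerivAt (fun x' : ℝ => (x', t)) ((1 : ℝ), (0 : ℝ)) x :=
      (hasDerivAt_id x).prodMk (hasDerivAt_const x t)
    have hcurve : HasDerivAt (fun x' => fderiv ℝ F (x', t) ((0 : ℝ), (1 : ℝ)))
        (D (1, 0) (0, 1)) x := by have := hg.comp_hasDerivAt x h2; exact this
    have heq : (fun x' => pdt f x' t) = fun x' => fderiv ℝ F (x', t) ((0 : ℝ), (1 : ℝ)) := by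
      funext x'
      exact pdt_eq_fderiv hf x' t
    show deriv (fun x' => pdt f x' t) x = D (1, 0) (0, 1)
    rw [heq]
    exact hcurve.deriv
  rw [key1, key2]
  exact second_derivative_symmetric
    (fun y => ((hf.differentiable (by simp)) y).hasFDerivAt) hD _ _

lemma contDiff_slice_x (hf : ContDiff ℝ (⊤ : ℕ∞) ↿f) (t : ℝ) :
    ContDiff ℝ (⊤ : ℕ∞) (fun x => f x t) :=
  hf.comp (contDiff_id.prodMk contDiff_const)

lemma contDiff_slice_t (hf : ContDiff ℝ (⊤ : ℕ∞) ↿f) (x : ℝ) :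
    ContDiff ℝ (⊤ : ℕ∞) (fun t => f x t) :=
  hf.comp (contDiff_const.prodMk contDiff_id)

end helpers

/-- Jump condition across a twist wave: for smooth solutions of
`(v_t + u v_x)_x = 0`, `u_xx = v_x²` with `v_x(·,t)` compactly supported and
`u_x → σ±(t)` as `x → ±∞` (with enough integrability to integrate by parts and
differentiate under the integral sign), the jump `[u_x]` satisfies
`(d/dt)[u_x] + ½[u_x²] = 0`, i.e. `σ₊′ + σ₊²/2 = σ₋′ + σ₋²/2`. -/
theorem jump_condition
    (T : ℝ) (hT : 0 < T) (u v : ℝ → ℝ → ℝ) (σp σm : ℝ → ℝ)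
    (hu : ContDiff ℝ (⊤ : ℕ∞) ↿u) (hv : ContDiff ℝ (⊤ : ℕ∞) ↿v)
    (h1 : ∀ x : ℝ, ∀ t ∈ Set.Icc (0 : ℝ) T,
      pdx (fun x' t' => pdt v x' t' + u x' t' * pdx v x' t') x t = 0)
    (h2 : ∀ x : ℝ, ∀ t ∈ Set.Icc (0 : ℝ) T,
      pdx (pdx u) x t = (pdx v x t) ^ 2)
    (hsupp : ∀ t ∈ Set.Icc (0 : ℝ) T, HasCompactSupport (fun x => pdx v x t))
    (hlimp : ∀ t ∈ Set.Icc (0 : ℝ) T,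
      Tendsto (fun x => pdx u x t) atTop (nhds (σp t)))
    (hlimm : ∀ t ∈ Set.Icc (0 : ℝ) T,
      Tendsto (fun x => pdx u x t) atBot (nhds (σm t)))
    (hσp : Differentiable ℝ σp) (hσm : Differentiable ℝ σm)
    (hint : ∀ t ∈ Set.Icc (0 : ℝ) T,
      Integrable (fun x => (pdx v x t) ^ 2))
    (hdiff : ∀ t ∈ Set.Icc (0 : ℝ) T,
      HasDerivAt (fun s => ∫ x : ℝ, (pdx v x s) ^ 2)
        (∫ x : ℝ, pdt (fun x' t' => (pdx v x' t') ^ 2) x t) t) :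
    ∀ t ∈ Set.Icc (0 : ℝ) T,
      deriv σp t + (σp t) ^ 2 / 2 = deriv σm t + (σm t) ^ 2 / 2 := by
  -- derivative of u_x in x is v_x², for every time in [0,T]
  have hderux : ∀ s ∈ Set.Icc (0 : ℝ) T, ∀ x : ℝ,
      HasDerivAt (fun x' => pdx u x' s) ((pdx v x s) ^ 2) x := by
    intro s hs x
    have hd : DifferentiableAt ℝ (fun x' => pdx u x' s) x :=
      ((contDiff_slice_x (contDiff_pdx hu) s).differentiable (by simp)) x
    have h := hd.hasDerivAt
    rwa [show deriv (fun x' => pdx u x' s) x = pdx (pdx u) x s from rfl, h2 x s hs] at h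
  -- jump of u_x equals the integral of v_x²
  have hjump : ∀ s ∈ Set.Icc (0 : ℝ) T,
      (∫ x : ℝ, (pdx v x s) ^ 2) = σp s - σm s := by
    intro s hs
    have hi := hint s hs
    rw [← intervalIntegral.integral_Iic_add_Ioi (b := 0) hi.integrableOn hi.integrableOn,
      integral_Ioi_of_hasDerivAt_of_tendsto' (fun x _ => hderux s hs x) hi.integrableOn
        (hlimp s hs),
      integral_Iic_of_hasDerivAt_of_tendsto' (fun x _ => hderux s hs x) hi.integrableOn
        (hlimm s hs)]
    ring
  intro t ht
  -- continuity facts at time t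
  have hux_cont : Continuous (fun x => pdx u x t) :=
    (contDiff_slice_x (contDiff_pdx hu) t).continuous
  have hvx_cont : Continuous (fun x => pdx v x t) :=
    (contDiff_slice_x (contDiff_pdx hv) t).continuous
  -- compact support facts
  have hcs := hsupp t ht
  have hcs2 : HasCompactSupport (fun x => (pdx v x t) ^ 2) := by
    have heq : (fun x => (pdx v x t) ^ 2)
        = (fun x => pdx v x t) * (fun x => pdx v x t) := by
      funext x; simp [sq]
    rw [heq]
    exact hcs.mul_right
  have hcsmul : HasCompactSupport (fun x => pdx u x t * (pdx v x t) ^ 2) := by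
    have heq : (fun x => pdx u x t * (pdx v x t) ^ 2)
        = (fun x => pdx u x t) * (fun x => (pdx v x t) ^ 2) := rfl
    rw [heq]
    exact hcs2.mul_left
  have hintmul : Integrable (fun x => pdx u x t * (pdx v x t) ^ 2) :=
    (hux_cont.mul (hvx_cont.pow 2)).integrable_of_hasCompactSupport hcsmul
  -- ∫ u_x v_x² = (σ₊² - σ₋²)/2
  have hderH : ∀ x : ℝ, HasDerivAt (fun y => (pdx u y t) ^ 2 / 2)
      (pdx u x t * (pdx v x t) ^ 2) x := by
    intro x
    have h := ((hderux t ht x).fun_pow 2).div_const 2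
    exact h.congr_deriv (by ring)
  have hB : (∫ x : ℝ, pdx u x t * (pdx v x t) ^ 2)
      = (σp t) ^ 2 / 2 - (σm t) ^ 2 / 2 := by
    have htp : Tendsto (fun x => (pdx u x t) ^ 2 / 2) atTop (nhds ((σp t) ^ 2 / 2)) :=
      ((hlimp t ht).pow 2).div_const 2
    have htm : Tendsto (fun x => (pdx u x t) ^ 2 / 2) atBot (nhds ((σm t) ^ 2 / 2)) :=
      ((hlimm t ht).pow 2).div_const 2
    rw [← intervalIntegral.integral_Iic_add_Ioi (b := 0) hintmul.integrableOn hintmul.integrableOn,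
      integral_Ioi_of_hasDerivAt_of_tendsto' (fun x _ => hderH x) hintmul.integrableOn htp,
      integral_Iic_of_hasDerivAt_of_tendsto' (fun x _ => hderH x) hintmul.integrableOn htm]
    ring
  -- the transported-flux function g = u v_x²
  set g : ℝ → ℝ := fun y => u y t * (pdx v y t) ^ 2 with hgdef
  have hgsmooth : ContDiff ℝ (⊤ : ℕ∞) g :=
    (contDiff_slice_x hu t).mul ((contDiff_slice_x (contDiff_pdx hv) t).pow 2)
  have hgC1 : ContDiff ℝ 1 g := hgsmooth.of_le (by simp)
  have hcsg : HasCompactSupport g := by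
    have heq : g = (fun y => u y t) * (fun y => (pdx v y t) ^ 2) := rfl
    rw [heq]
    exact hcs2.mul_left
  have hderivg_cont : Continuous (deriv g) := hgsmooth.continuous_deriv (by simp)
  have hintderivg : Integrable (deriv g) :=
    hderivg_cont.integrable_of_hasCompactSupport hcsg.deriv
  have hg0 : (∫ x : ℝ, deriv g x) = 0 := by
    rw [← intervalIntegral.integral_Iic_add_Ioi (b := 0) hintderivg.integrableOn hintderivg.integrableOn,
      hcsg.integral_Ioi_deriv_eq hgC1 0, hcsg.integral_Iic_deriv_eq hgC1 0]
    ring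
  -- pointwise identity for the time derivative of v_x²
  have hpt : ∀ x : ℝ, pdt (fun x' t' => (pdx v x' t') ^ 2) x t
      = -(deriv g x + pdx u x t * (pdx v x t) ^ 2) := by
    intro x
    have hdvt : HasDerivAt (fun t' => pdx v x t') (pdt (pdx v) x t) t :=
      (((contDiff_slice_t (contDiff_pdx hv) x).differentiable (by simp)) t).hasDerivAt
    have hL : pdt (fun x' t' => (pdx v x' t') ^ 2) x t
        = 2 * pdx v x t * pdt (pdx v) x t := by
      show deriv (fun t' => (pdx v x t') ^ 2) t = _
      rw [(hdvt.fun_pow 2).deriv]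
      ring
    have hdu : HasDerivAt (fun y => u y t) (pdx u x t) x :=
      (((contDiff_slice_x hu t).differentiable (by simp)) x).hasDerivAt
    have hdvx : HasDerivAt (fun y => pdx v y t) (pdx (pdx v) x t) x :=
      (((contDiff_slice_x (contDiff_pdx hv) t).differentiable (by simp)) x).hasDerivAt
    have hR : deriv g x
        = pdx u x t * (pdx v x t) ^ 2 + u x t * (2 * pdx v x t * pdx (pdx v) x t) := by
      rw [hgdef, (show HasDerivAt (fun y => u y t * pdx v y t ^ 2) _ x from hdu.mul (hdvx.fun_pow 2)).deriv]
      ring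
    have hadv : pdx (pdt v) x t
        = -(pdx u x t * pdx v x t + u x t * pdx (pdx v) x t) := by
      have h0 := h1 x t ht
      have hdt : DifferentiableAt ℝ (fun x' => pdt v x' t) x :=
        ((contDiff_slice_x (contDiff_pdt hv) t).differentiable (by simp)) x
      have hdu' : DifferentiableAt ℝ (fun x' => u x' t) x :=
        ((contDiff_slice_x hu t).differentiable (by simp)) x
      have hdv' : DifferentiableAt ℝ (fun x' => pdx v x' t) x :=
        ((contDiff_slice_x (contDiff_pdx hv) t).differentiable (by simp)) x
      have e : pdx (fun x' t' => pdt v x' t' + u x' t' * pdx v x' t') x t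
          = pdx (pdt v) x t + (pdx u x t * pdx v x t + u x t * pdx (pdx v) x t) := by
        show deriv (fun x' => pdt v x' t + u x' t * pdx v x' t) x = _
        rw [deriv_fun_add hdt (show DifferentiableAt ℝ (fun y => u y t * pdx v y t) x from hdu'.mul hdv'), deriv_fun_mul hdu' hdv']
        rfl
      rw [e] at h0
      linarith
    rw [hL, mixed_partials hv x t, hadv, hR]
    ring
  -- value of the time derivative of the integral
  have hE : (∫ x : ℝ, pdt (fun x' t' => (pdx v x' t') ^ 2) x t)
      = -((σp t) ^ 2 / 2 - (σm t) ^ 2 / 2) := by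
    have heq : (fun x => pdt (fun x' t' => (pdx v x' t') ^ 2) x t)
        = fun x => -(deriv g x + pdx u x t * (pdx v x t) ^ 2) := funext hpt
    rw [heq, integral_neg, integral_add hintderivg hintmul, hg0, hB]
    ring
  -- match the two derivatives of the jump on [0,T]
  have hud : UniqueDiffWithinAt ℝ (Set.Icc (0 : ℝ) T) t := (uniqueDiffOn_Icc hT) t ht
  have hW1 : HasDerivWithinAt (fun s => σp s - σm s)
      (∫ x : ℝ, pdt (fun x' t' => (pdx v x' t') ^ 2) x t) (Set.Icc (0 : ℝ) T) t :=
    ((hdiff t ht).hasDerivWithinAt).congr (fun y hy => (hjump y hy).symm) ((hjump t ht).symm)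
  have hW2 : HasDerivWithinAt (fun s => σp s - σm s)
      (deriv σp t - deriv σm t) (Set.Icc (0 : ℝ) T) t :=
    ((hσp t).hasDerivAt.sub (hσm t).hasDerivAt).hasDerivWithinAt
  have hkey : deriv σp t - deriv σm t
      = ∫ x : ℝ, pdt (fun x' t' => (pdx v x' t') ^ 2) x t := by
    rw [← hW2.derivWithin hud, hW1.derivWithin hud]
  rw [hE] at hkey
  linarith
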